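/- If G is a triangle-free graph of order n, then the smallest signless Laplacian eigenvalue satisfies q_min(G) < 2n/9. -/

import Mathlib

/-!
Let `q = q_min(G)` and suppose `q ≥ 2n/9`. The Rayleigh quotient of a coordinate vector gives
`q ≤ d(v)` for every vertex. Let `u` have maximum degree `Δ`. For a neighbour `w` of `u`,
triangle-freeness makes `N(u)` and `N(w)` disjoint independent sets, so the test vector
`x = 1_{N(u)} - 1_{N(w)}` has `‖x‖² = d(u) + d(w) ≥ Δ + q` and
`xᵀQx = ∑_{N(u)} d + ∑_{N(w)} d - 2 e(N(u), N(w))`.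
Summing over `w ∈ N(u)` turns the right-hand sides into `∑_t c_t (Δ + d(t) - 2 c_t)`, where `c_t`
counts the common neighbours of `u` and `t`; the term of `t` vanishes when `t ∈ N(u)` and is at
most `Δ²/2` otherwise. Hence `q (Δ + q) ≤ (n - Δ) Δ / 2`, which is impossible for `q ≥ 2n/9`
because `81Δ² - 45nΔ + 8n² > 0`.
-/

open Matrix SimpleGraph Finset

/-- The signless Laplacian matrix `Q(G) = D + A` of a finite simple graph `G`. -/
noncomputable def signlessLaplacian {V : Type} [Fintype V] [DecidableEq V]
    (G : SimpleGraph V) : Matrix V V ℝ :=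
  letI := Classical.decRel G.Adj
  Matrix.diagonal (fun v => (G.degree v : ℝ)) + G.adjMatrix ℝ

theorem signlessLaplacian_isHermitian {V : Type} [Fintype V] [DecidableEq V]
    (G : SimpleGraph V) : (signlessLaplacian G).IsHermitian := by
  letI := Classical.decRel G.Adj
  unfold signlessLaplacian
  refine Matrix.IsHermitian.add (Matrix.isHermitian_diagonal _) ?_
  rw [Matrix.IsHermitian, conjTranspose_eq_transpose_of_trivial]
  exact G.isSymm_adjMatrix

/-- `qmin G` is the smallest eigenvalue of the signless Laplacian of `G`. -/
noncomputable def qmin {V : Type} [Fintype V] [DecidableEq V] (G : SimpleGraph V) : ℝ :=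
  ⨅ i, (signlessLaplacian_isHermitian G).eigenvalues i

open scoped MatrixOrder in
theorem Matrix.IsHermitian.iInf_eigenvalues_mul_dotProduct_self_le {n : Type*} [Fintype n]
    [DecidableEq n] {M : Matrix n n ℝ} (hM : M.IsHermitian) (x : n → ℝ) :
    (⨅ i, hM.eigenvalues i) * (x ⬝ᵥ x) ≤ x ⬝ᵥ (M *ᵥ x) := by
  have hle : algebraMap ℝ (Matrix n n ℝ) (⨅ i, hM.eigenvalues i) ≤ M := by
    rw [algebraMap_le_iff_le_spectrum hM.isSelfAdjoint, hM.spectrum_real_eq_range_eigenvalues]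
    rintro _ ⟨i, rfl⟩
    exact ciInf_le (Finite.bddBelow_range _) i
  simpa [sub_mulVec, Algebra.algebraMap_eq_smul_one, smul_mulVec, dotProduct_smul] using
    (le_iff.mp hle).dotProduct_mulVec_nonneg x

/-- For an adjacency matrix `M` and `a` the row of `u`, the left side is the sum of the quadratic
forms of the test vectors `M u - M w` over the neighbours `w` of `u`, and `(a ᵥ* M) t` counts the
common neighbours of `u` and `t`. -/
theorem Matrix.sum_mul_dotProduct_eq_sum_vecMul {n R : Type*} [Fintype n] [CommRing R]
    (M : Matrix n n R) (a : n → R) :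
    ∑ w, a w * (a ⬝ᵥ (M *ᵥ 1) + M w ⬝ᵥ (M *ᵥ 1) - 2 * (a ⬝ᵥ (M *ᵥ M w)))
      = ∑ t, (a ᵥ* M) t * (a ⬝ᵥ 1 + (M *ᵥ 1) t - 2 * (a ᵥ* M) t) := by
  set e := a ᵥ* M
  have hpair : ∀ w, a ⬝ᵥ (M *ᵥ M w) = (M *ᵥ e) w := fun w => by
    rw [dotProduct_mulVec, dotProduct_comm]; rfl
  calc _ = (a ⬝ᵥ 1) * (a ⬝ᵥ (M *ᵥ 1)) + a ⬝ᵥ (M *ᵥ (M *ᵥ 1)) - 2 * (a ⬝ᵥ (M *ᵥ e)) := by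
        simp only [hpair, mul_add, mul_sub, sum_add_distrib, sum_sub_distrib, ← sum_mul]
        simp [dotProduct, mulVec, mul_sum, mul_left_comm]
    _ = (a ⬝ᵥ 1) * (e ⬝ᵥ 1) + e ⬝ᵥ (M *ᵥ 1) - 2 * (e ⬝ᵥ e) := by
        simp only [dotProduct_mulVec, e]
    _ = _ := by
        generalize a ⬝ᵥ 1 = s
        simp only [dotProduct, Pi.one_apply, mul_one, mul_add, mul_sub, sum_add_distrib,
          sum_sub_distrib, mul_sum]
        ring_nf

namespace SimpleGraph

variable {V : Type} {G : SimpleGraph V} [DecidableRel G.Adj] {α : Type*}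

theorem CliqueFree.adjMatrix_mul_adjMatrix_eq_zero [MulZeroOneClass α] (hG : G.CliqueFree 3)
    {u w : V} (huw : G.Adj u w) (v : V) :
    G.adjMatrix α u v * G.adjMatrix α w v = 0 := by
  by_cases hu : G.Adj u v
  · have hw : ¬G.Adj w v := fun hw =>
      isIndepSet_neighborSet_of_triangleFree G hG v hu.symm hw.symm (G.ne_of_adj huw) huw
    simp [hw]
  · simp [hu]

variable [Fintype V]

theorem sum_adjMatrix_apply [NonAssocSemiring α] (u : V) :
    ∑ t, G.adjMatrix α u t = G.degree u := by
  simp [adjMatrix_apply, sum_boole, ← neighborFinset_eq_filter]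

theorem adjMatrix_mulVec_one_apply [NonAssocSemiring α] (v : V) :
    (G.adjMatrix α *ᵥ 1) v = G.degree v := by
  simp [adjMatrix_mulVec_apply]

theorem adjMatrix_dotProduct_self [NonAssocSemiring α] (v : V) :
    G.adjMatrix α v ⬝ᵥ G.adjMatrix α v = G.degree v := by
  simp [filter_true_of_mem]

namespace CliqueFree

theorem adjMatrix_dotProduct_adjMatrix_eq_zero [NonAssocSemiring α] (hG : G.CliqueFree 3)
    {u w : V} (huw : G.Adj u w) : G.adjMatrix α u ⬝ᵥ G.adjMatrix α w = 0 :=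
  sum_eq_zero fun v _ => hG.adjMatrix_mul_adjMatrix_eq_zero huw v

theorem adjMatrix_dotProduct_adjMatrix_mulVec_adjMatrix_eq_zero [NonAssocSemiring α]
    (hG : G.CliqueFree 3) (u : V) :
    G.adjMatrix α u ⬝ᵥ (G.adjMatrix α *ᵥ G.adjMatrix α u) = 0 := by
  rw [adjMatrix_dotProduct]
  exact sum_eq_zero fun v hv =>
    hG.adjMatrix_dotProduct_adjMatrix_eq_zero ((mem_neighborFinset G u v).mp hv).symm

theorem dotProduct_self_adjMatrix_sub_adjMatrix (hG : G.CliqueFree 3) {u w : V}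
    (huw : G.Adj u w) :
    (G.adjMatrix ℝ u - G.adjMatrix ℝ w) ⬝ᵥ (G.adjMatrix ℝ u - G.adjMatrix ℝ w)
      = G.degree u + G.degree w := by
  rw [sub_dotProduct, dotProduct_sub, dotProduct_sub, adjMatrix_dotProduct_self,
    adjMatrix_dotProduct_self, hG.adjMatrix_dotProduct_adjMatrix_eq_zero huw,
    hG.adjMatrix_dotProduct_adjMatrix_eq_zero huw.symm]
  ring

theorem sum_mulVec_adjMatrix_mul_le (hG : G.CliqueFree 3) {u : V}
    (hu : ∀ v, G.degree v ≤ G.degree u) :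
    ∑ t, (G.adjMatrix ℝ *ᵥ G.adjMatrix ℝ u) t
        * (G.degree u + (G.adjMatrix ℝ *ᵥ 1) t - 2 * (G.adjMatrix ℝ *ᵥ G.adjMatrix ℝ u) t)
      ≤ (Fintype.card V - G.degree u) * G.degree u ^ 2 / 2 := by
  set A := G.adjMatrix ℝ
  set Δ : ℝ := (G.degree u : ℝ)
  calc _ ≤ ∑ t, (1 - A u t) * (Δ ^ 2 / 2) := by
        refine sum_le_sum fun t _ => ?_
        by_cases hut : G.Adj u t
        · have he : (A *ᵥ A u) t = 0 := hG.adjMatrix_dotProduct_adjMatrix_eq_zero hut.symm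
          simp [A, he, hut]
        · have he : 0 ≤ (A *ᵥ A u) t := by
            rw [adjMatrix_mulVec_apply]
            exact sum_nonneg fun v _ => by simp only [A, adjMatrix_apply]; split_ifs <;> norm_num
          have hdeg : (A *ᵥ 1) t ≤ Δ := by
            rw [show (A *ᵥ 1) t = G.degree t from adjMatrix_mulVec_one_apply t]
            exact Nat.cast_le.mpr (hu t)
          simp only [A, adjMatrix_apply, hut, if_false, sub_zero, one_mul]
          nlinarith [sq_nonneg (Δ - 2 * (A *ᵥ A u) t), mul_nonneg he (sub_nonneg.mpr hdeg)]
    _ = _ := by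
        rw [← sum_mul, sum_sub_distrib, sum_adjMatrix_apply, sum_const, card_univ, nsmul_one]
        ring

end CliqueFree

end SimpleGraph

section SignlessLaplacian

variable {V : Type} [Fintype V] [DecidableEq V]

theorem signlessLaplacian_eq (G : SimpleGraph V) [DecidableRel G.Adj] :
    signlessLaplacian G = diagonal (G.adjMatrix ℝ *ᵥ 1) + G.adjMatrix ℝ := by
  unfold signlessLaplacian
  congr! 2
  ext v
  rw [adjMatrix_mulVec_one_apply]
  congr!

theorem qmin_mul_dotProduct_self_le (G : SimpleGraph V) (x : V → ℝ) :
    qmin G * (x ⬝ᵥ x) ≤ x ⬝ᵥ (signlessLaplacian G *ᵥ x) :=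
  (signlessLaplacian_isHermitian G).iInf_eigenvalues_mul_dotProduct_self_le x

theorem qmin_le_degree (G : SimpleGraph V) [DecidableRel G.Adj] (v : V) :
    qmin G ≤ G.degree v := by
  simpa [signlessLaplacian_eq] using qmin_mul_dotProduct_self_le G (Pi.single v 1)

namespace SimpleGraph.CliqueFree

variable {G : SimpleGraph V} [DecidableRel G.Adj]

theorem dotProduct_signlessLaplacian_mulVec_adjMatrix_sub_adjMatrix (hG : G.CliqueFree 3)
    {u w : V} (huw : G.Adj u w) :
    (G.adjMatrix ℝ u - G.adjMatrix ℝ w) ⬝ᵥ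
        (signlessLaplacian G *ᵥ (G.adjMatrix ℝ u - G.adjMatrix ℝ w))
      = G.adjMatrix ℝ u ⬝ᵥ (G.adjMatrix ℝ *ᵥ 1) + G.adjMatrix ℝ w ⬝ᵥ (G.adjMatrix ℝ *ᵥ 1)
        - 2 * (G.adjMatrix ℝ u ⬝ᵥ (G.adjMatrix ℝ *ᵥ G.adjMatrix ℝ w)) := by
  set A := G.adjMatrix ℝ
  have hdiag : (A u - A w) ⬝ᵥ (diagonal (A *ᵥ 1) *ᵥ (A u - A w))
      = A u ⬝ᵥ (A *ᵥ 1) + A w ⬝ᵥ (A *ᵥ 1) := by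
    simp only [dotProduct, mulVec_diagonal, Pi.sub_apply, ← sum_add_distrib]
    refine sum_congr rfl fun v _ => ?_
    have hu := congrFun (congrFun (G.adjMatrix_hadamard_self (α := ℝ)) u) v
    have hw := congrFun (congrFun (G.adjMatrix_hadamard_self (α := ℝ)) w) v
    simp only [hadamard_apply] at hu hw
    linear_combination
      (A *ᵥ 1) v * (hu + hw - 2 * hG.adjMatrix_mul_adjMatrix_eq_zero (α := ℝ) huw v)
  have hsymm : A w ⬝ᵥ (A *ᵥ A u) = A u ⬝ᵥ (A *ᵥ A w) := by
    rw [dotProduct_mulVec, ← mulVec_transpose, transpose_adjMatrix, dotProduct_comm]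
  rw [signlessLaplacian_eq, add_mulVec, dotProduct_add, hdiag, mulVec_sub, dotProduct_sub,
    sub_dotProduct, sub_dotProduct, hG.adjMatrix_dotProduct_adjMatrix_mulVec_adjMatrix_eq_zero,
    hG.adjMatrix_dotProduct_adjMatrix_mulVec_adjMatrix_eq_zero, hsymm]
  ring

theorem qmin_mul_degree_add_qmin_le (hG : G.CliqueFree 3) {u : V}
    (hu : ∀ v, G.degree v ≤ G.degree u) (hq : 0 < qmin G) :
    qmin G * (G.degree u + qmin G) ≤ (Fintype.card V - G.degree u) * G.degree u / 2 := by
  set A := G.adjMatrix ℝ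
  set q := qmin G
  set Δ : ℝ := (G.degree u : ℝ)
  have hΔ : 0 < Δ := hq.trans_le (qmin_le_degree G u)
  have hrow : ∑ w, A u w = Δ := sum_adjMatrix_apply u
  suffices Δ * (q * (Δ + q)) ≤ Δ * ((Fintype.card V - Δ) * Δ / 2) from
    le_of_mul_le_mul_left this hΔ
  calc Δ * (q * (Δ + q)) = ∑ w, A u w * (q * (Δ + q)) := by rw [← sum_mul, hrow]
    _ ≤ ∑ w, A u w * (A u ⬝ᵥ (A *ᵥ 1) + A w ⬝ᵥ (A *ᵥ 1) - 2 * (A u ⬝ᵥ (A *ᵥ A w))) := by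
        refine sum_le_sum fun w _ => ?_
        by_cases huw : G.Adj u w
        · have hray := qmin_mul_dotProduct_self_le G (A u - A w)
          rw [hG.dotProduct_self_adjMatrix_sub_adjMatrix huw,
            hG.dotProduct_signlessLaplacian_mulVec_adjMatrix_sub_adjMatrix huw] at hray
          have hqw := qmin_le_degree G w
          simp only [A, adjMatrix_apply, huw, if_true, one_mul]
          nlinarith
        · simp [A, huw]
    _ = ∑ t, (A *ᵥ A u) t * (Δ + (A *ᵥ 1) t - 2 * (A *ᵥ A u) t) := by
        rw [sum_mul_dotProduct_eq_sum_vecMul, ← mulVec_transpose, transpose_adjMatrix,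
          dotProduct_one, hrow]
    _ ≤ (Fintype.card V - Δ) * Δ ^ 2 / 2 := hG.sum_mulVec_adjMatrix_mul_le hu
    _ = Δ * ((Fintype.card V - Δ) * Δ / 2) := by ring

end SimpleGraph.CliqueFree

end SignlessLaplacian

/-- If `G` is a triangle-free graph of order `n`, then `qmin G < 2n/9`. -/
theorem qmin_lt_of_triangleFree {n : ℕ} (hn : 0 < n) (G : SimpleGraph (Fin n))
    (hG : G.CliqueFree 3) :
    qmin G < 2 * n / 9 := by
  classical
  have : Nonempty (Fin n) := ⟨⟨0, hn⟩⟩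
  obtain ⟨u, hu⟩ := G.exists_maximal_degree_vertex
  by_contra! hq
  have hn' : (0 : ℝ) < n := by exact_mod_cast hn
  have hq0 : 0 < qmin G := lt_of_lt_of_le (by positivity) hq
  have key := hG.qmin_mul_degree_add_qmin_le (fun v => hu ▸ G.degree_le_maxDegree v) hq0
  have hqu := qmin_le_degree G u
  rw [Fintype.card_fin] at key
  nlinarith [sq_nonneg (18 * (G.degree u : ℝ) - 5 * n)]
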